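/- Let v₀, v₁, v₂, v₃ ∈ ℂ² be nonzero vectors that are pairwise linearly independent over ℂ, and let λ₀, λ₁, λ₂, λ₃ ∈ ℂ be nonzero scalars. Set w_i = λ_i·v_i for i = 0,…,3. Then f(w₀,w₁,w₂,w₃) · ∫_{Δ³} Q_w(t)^{-2} dt₁ dt₂ dt₃ = f(v₀,v₁,v₂,v₃) · ∫_{Δ³} Q_v(t)^{-2} dt₁ dt₂ dt₃. -/

import Mathlib

open MeasureTheory

/-- `det2 v w = v₁·w₂ − v₂·w₁`, the determinant of the 2×2 matrix with columns `v` and `w`. -/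
noncomputable def det2 (v w : Fin 2 → ℂ) : ℂ := v 0 * w 1 - v 1 * w 0

/-- `f(v₀,v₁,v₂,v₃) = Im( det(v₀,v₁)·det(v₂,v₃)·conj(det(v₀,v₃))·conj(det(v₁,v₂)) )`. -/
noncomputable def f4 (v₀ v₁ v₂ v₃ : Fin 2 → ℂ) : ℝ :=
  (det2 v₀ v₁ * det2 v₂ v₃ * (starRingEnd ℂ) (det2 v₀ v₃) *
    (starRingEnd ℂ) (det2 v₁ v₂)).im

/-- `Q_v(t) = ∑_{i≠j} t_i t_j |det(v_i,v_j)|²`, sum over ordered pairs of distinct indices. -/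
noncomputable def Qform (v : Fin 4 → Fin 2 → ℂ) (t : Fin 4 → ℝ) : ℝ :=
  ∑ i : Fin 4, ∑ j : Fin 4,
    if i ≠ j then t i * t j * ‖det2 (v i) (v j)‖ ^ 2 else 0

/-- The parameter domain `{(t₁,t₂,t₃) : tᵢ ≥ 0, t₁+t₂+t₃ ≤ 1}` of the 3-simplex. -/
def simplexDom : Set (Fin 3 → ℝ) :=
  {p | (∀ i, 0 ≤ p i) ∧ p 0 + p 1 + p 2 ≤ 1}

/-- The point of the 3-simplex with coordinates `(1−t₁−t₂−t₃, t₁, t₂, t₃)`. -/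
noncomputable def tOf (p : Fin 3 → ℝ) : Fin 4 → ℝ :=
  ![1 - p 0 - p 1 - p 2, p 0, p 1, p 2]

/-- `∫_{Δ³} Q_v(t)^{-2} dt₁ dt₂ dt₃`. -/
noncomputable def Jint (v : Fin 4 → Fin 2 → ℂ) : ℝ :=
  ∫ p in simplexDom, (Qform v (tOf p) ^ 2)⁻¹

/-!
Rescaling `vᵢ ↦ λᵢ vᵢ` multiplies `|det(vᵢ, vⱼ)|²` by `cᵢ cⱼ` with `cᵢ = |λᵢ|²`, so `f` gets
multiplied by `c₀c₁c₂c₃` and `Q_w(t) = Q_v(c t)`. The projective substitution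
`t ↦ c t / ⟨c, t⟩` maps the simplex onto itself with Jacobian `c₀c₁c₂c₃ / ⟨c, t⟩⁴`, and since
`Q_v⁻²` is homogeneous of degree `-4` it turns `∫ Q_v⁻²` into `c₀c₁c₂c₃ ∫ Q_w⁻²`.
The two factors cancel.
-/

lemma det2_smul (a b : ℂ) (v w : Fin 2 → ℂ) : det2 (a • v) (b • w) = a * b * det2 v w := by
  simp only [det2, Pi.smul_apply, smul_eq_mul]
  ring

lemma f4_smul (l : Fin 4 → ℂ) (v : Fin 4 → Fin 2 → ℂ) :
    f4 (l 0 • v 0) (l 1 • v 1) (l 2 • v 2) (l 3 • v 3) =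
      Complex.normSq (l 0 * l 1 * l 2 * l 3) * f4 (v 0) (v 1) (v 2) (v 3) := by
  rw [f4, f4, ← Complex.im_ofReal_mul, ← Complex.mul_conj]
  simp only [det2_smul, map_mul]
  ring_nf

lemma Qform_smul_vectors (l : Fin 4 → ℂ) (v : Fin 4 → Fin 2 → ℂ) (t : Fin 4 → ℝ) :
    Qform (fun i => l i • v i) t = Qform v (fun i => ‖l i‖ ^ 2 * t i) := by
  simp only [Qform, det2_smul, norm_mul]
  congr! 3 with i - j -
  ring

lemma Qform_smul (v : Fin 4 → Fin 2 → ℂ) (a : ℝ) (t : Fin 4 → ℝ) :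
    Qform v (a • t) = a ^ 2 * Qform v t := by
  simp only [Qform, Finset.mul_sum, Pi.smul_apply, smul_eq_mul, mul_ite, mul_zero]
  congr! 3
  ring

lemma tOf_zero (p : Fin 3 → ℝ) : tOf p 0 = 1 - p 0 - p 1 - p 2 := rfl

lemma tOf_succ (p : Fin 3 → ℝ) (j : Fin 3) : tOf p j.succ = p j := by
  fin_cases j <;> rfl

lemma sum_tOf (p : Fin 3 → ℝ) : ∑ i, tOf p i = 1 := by
  rw [Fin.sum_univ_succ]
  simp only [tOf_zero, tOf_succ, Fin.sum_univ_three]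
  ring

lemma mem_simplexDom_iff {p : Fin 3 → ℝ} : p ∈ simplexDom ↔ ∀ i, 0 ≤ tOf p i := by
  rw [Fin.forall_fin_succ, tOf_zero]
  simp only [tOf_succ]
  exact ⟨fun ⟨h, hs⟩ => ⟨by linarith, h⟩, fun ⟨h0, h⟩ => ⟨h, by linarith⟩⟩

lemma measurableSet_simplexDom : MeasurableSet simplexDom := by
  unfold simplexDom
  measurability

noncomputable def simplexWeight (c : Fin 4 → ℝ) (p : Fin 3 → ℝ) : ℝ := ∑ i, c i * tOf p i

/-- In barycentric coordinates: the projective rescaling `t ↦ c t / ⟨c, t⟩` of the simplex. -/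
noncomputable def simplexRescale (c : Fin 4 → ℝ) (p : Fin 3 → ℝ) : Fin 3 → ℝ :=
  fun j => c j.succ * p j / simplexWeight c p

section simplexRescale

variable {c : Fin 4 → ℝ} {p : Fin 3 → ℝ}

lemma simplexWeight_eq (c : Fin 4 → ℝ) (p : Fin 3 → ℝ) :
    simplexWeight c p = c 0 + ∑ j, (c j.succ - c 0) * p j := by
  rw [simplexWeight, Fin.sum_univ_succ, tOf_zero]
  simp only [tOf_succ, Fin.sum_univ_three]
  ring

lemma simplexWeight_pos (hc : ∀ i, 0 < c i) (hp : p ∈ simplexDom) : 0 < simplexWeight c p := by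
  have ht := mem_simplexDom_iff.1 hp
  obtain ⟨i, hi⟩ : ∃ i, 0 < tOf p i := by
    by_contra! h
    have := Finset.sum_nonpos fun i (_ : i ∈ Finset.univ) => h i
    rw [sum_tOf] at this
    linarith
  exact Finset.sum_pos' (fun i _ => mul_nonneg (hc i).le (ht i))
    ⟨i, Finset.mem_univ _, mul_pos (hc i) hi⟩

lemma tOf_simplexRescale (hD : simplexWeight c p ≠ 0) :
    tOf (simplexRescale c p) = (simplexWeight c p)⁻¹ • (c * tOf p) := by
  funext i
  refine Fin.cases ?_ (fun j => ?_) i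
  · simp only [tOf_zero, simplexRescale, Pi.smul_apply, Pi.mul_apply, smul_eq_mul]
    field_simp
    rw [simplexWeight_eq, Fin.sum_univ_three]
    ring
  · simp only [tOf_succ, simplexRescale, Pi.smul_apply, Pi.mul_apply, smul_eq_mul]
    ring

lemma simplexRescale_mem (hc : ∀ i, 0 < c i) (hp : p ∈ simplexDom) :
    simplexRescale c p ∈ simplexDom := by
  have hD := simplexWeight_pos hc hp
  rw [mem_simplexDom_iff, tOf_simplexRescale hD.ne']
  intro i
  have := mem_simplexDom_iff.1 hp i
  have := hc i
  simp only [Pi.smul_apply, Pi.mul_apply, smul_eq_mul]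
  positivity

lemma simplexWeight_inv_simplexRescale (hc : ∀ i, 0 < c i) (hp : p ∈ simplexDom) :
    simplexWeight c⁻¹ (simplexRescale c p) = (simplexWeight c p)⁻¹ := by
  have hD := (simplexWeight_pos hc hp).ne'
  have hterm (i : Fin 4) :
      c⁻¹ i * tOf (simplexRescale c p) i = (simplexWeight c p)⁻¹ * tOf p i := by
    have := (hc i).ne'
    rw [tOf_simplexRescale hD]
    simp only [Pi.inv_apply, Pi.smul_apply, Pi.mul_apply, smul_eq_mul]
    field_simp
  rw [simplexWeight, Finset.sum_congr rfl fun i _ => hterm i, ← Finset.mul_sum, sum_tOf, mul_one]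

lemma simplexRescale_inv_simplexRescale (hc : ∀ i, 0 < c i) (hp : p ∈ simplexDom) :
    simplexRescale c⁻¹ (simplexRescale c p) = p := by
  have hD := (simplexWeight_pos hc hp).ne'
  funext j
  have := (hc j.succ).ne'
  rw [simplexRescale, simplexWeight_inv_simplexRescale hc hp, simplexRescale, Pi.inv_apply]
  field_simp

lemma simplexRescale_bijOn (hc : ∀ i, 0 < c i) :
    Set.BijOn (simplexRescale c) simplexDom simplexDom := by
  have hc' : ∀ i, 0 < c⁻¹ i := fun i => inv_pos.2 (hc i)
  refine Set.InvOn.bijOn ⟨fun p hp => simplexRescale_inv_simplexRescale hc hp, fun q hq => ?_⟩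
    (fun p hp => simplexRescale_mem hc hp) (fun q hq => simplexRescale_mem hc' hq)
  simpa using simplexRescale_inv_simplexRescale hc' hq

end simplexRescale

section jacobian

variable (c : Fin 4 → ℝ) (p : Fin 3 → ℝ)

lemma hasFDerivAt_simplexWeight :
    HasFDerivAt (simplexWeight c)
      (∑ k : Fin 3, (c k.succ - c 0) • ContinuousLinearMap.proj (R := ℝ) (φ := fun _ => ℝ) k) p := by
  rw [funext (simplexWeight_eq c)]
  exact (HasFDerivAt.fun_sum (A := fun k (q : Fin 3 → ℝ) => (c k.succ - c 0) * q k)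
    fun k _ => (hasFDerivAt_apply k p).const_mul _).const_add _

noncomputable def rescaleJacobian : Matrix (Fin 3) (Fin 3) ℝ :=
  fun j k => c j.succ * ((if j = k then simplexWeight c p else 0) - p j * (c k.succ - c 0)) /
    simplexWeight c p ^ 2

variable {c p}

lemma hasFDerivAt_simplexRescale (hD : simplexWeight c p ≠ 0) :
    HasFDerivAt (simplexRescale c)
      (LinearMap.toContinuousLinearMap (Matrix.toLin' (rescaleJacobian c p))) p := by
  rw [hasFDerivAt_pi']
  intro j
  have h := ((hasFDerivAt_apply j p).const_mul (c j.succ)).mul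
    ((hasFDerivAt_inv' hD).comp p (hasFDerivAt_simplexWeight c p))
  have hfun : (fun q => simplexRescale c q j) =
      (fun q => c j.succ * q j) * Inv.inv ∘ simplexWeight c := by
    funext q
    simp only [simplexRescale, div_eq_mul_inv, Pi.mul_apply, Function.comp_apply]
  rw [hfun]
  refine h.congr_fderiv ?_
  ext x
  simp only [add_apply, smul_apply, neg_apply, ContinuousLinearMap.comp_apply,
    ContinuousLinearMap.proj_apply, ContinuousLinearMap.mulLeftRight_apply, smul_eq_mul,
    Function.comp_apply, LinearMap.coe_toContinuousLinearMap', Matrix.toLin'_apply, Matrix.mulVec,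
    dotProduct, rescaleJacobian, Fin.sum_univ_three]
  fin_cases j <;>
  · simp only [Fin.zero_eta, Fin.mk_one, Fin.reduceFinMk, Fin.isValue, Fin.reduceEq, if_true, if_false]
    field_simp
    ring

lemma det_rescaleJacobian (hD : simplexWeight c p ≠ 0) :
    (rescaleJacobian c p).det = (∏ i, c i) / simplexWeight c p ^ 4 := by
  have hc0 : c 0 = simplexWeight c p - ∑ k, (c k.succ - c 0) * p k := by
    rw [simplexWeight_eq]; ring
  rw [Matrix.det_fin_three, Fin.prod_univ_succ, hc0]
  simp only [rescaleJacobian, Fin.sum_univ_three, Fin.prod_univ_three, Fin.succ_zero_eq_one,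
    Fin.succ_one_eq_two, show (2 : Fin 3).succ = 3 from rfl]
  generalize simplexWeight c p = D at hD ⊢
  simp only [Fin.isValue, Fin.reduceEq, if_true, if_false]
  field_simp
  ring

end jacobian

/-- Projective invariance: the Jacobian `∏ cᵢ / simplexWeight c p ^ 4` of `simplexRescale c` is
absorbed by the homogeneity of `g` of degree `-4`. -/
theorem setIntegral_simplexDom_comp_tOf {c : Fin 4 → ℝ} (hc : ∀ i, 0 < c i)
    (g : (Fin 4 → ℝ) → ℝ) (hg : ∀ a : ℝ, 0 < a → ∀ t, g (a • t) = (a ^ 4)⁻¹ * g t) :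
    ∫ p in simplexDom, g (tOf p) = (∏ i, c i) * ∫ p in simplexDom, g (c * tOf p) := by
  have hbij := simplexRescale_bijOn hc
  have hderiv : ∀ p ∈ simplexDom, HasFDerivWithinAt (simplexRescale c)
      (LinearMap.toContinuousLinearMap (Matrix.toLin' (rescaleJacobian c p))) simplexDom p :=
    fun p hp => (hasFDerivAt_simplexRescale (simplexWeight_pos hc hp).ne').hasFDerivWithinAt
  conv_lhs => rw [← hbij.image_eq]
  rw [integral_image_eq_integral_abs_det_fderiv_smul volume measurableSet_simplexDom hderiv
    hbij.injOn, ← integral_const_mul]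
  refine setIntegral_congr_fun measurableSet_simplexDom fun p hp => ?_
  have hD := simplexWeight_pos hc hp
  have hprod : 0 < ∏ i, c i := Finset.prod_pos fun i _ => hc i
  rw [ContinuousLinearMap.det, LinearMap.coe_toContinuousLinearMap, LinearMap.det_toLin',
    det_rescaleJacobian hD.ne', abs_of_pos (by positivity), smul_eq_mul,
    tOf_simplexRescale hD.ne', hg _ (inv_pos.2 hD)]
  field_simp

lemma Jint_eq_mul_Jint_smul (v : Fin 4 → Fin 2 → ℂ) {l : Fin 4 → ℂ} (hl : ∀ i, l i ≠ 0) :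
    Jint v = (∏ i, ‖l i‖ ^ 2) * Jint (fun i => l i • v i) := by
  have hhom (a : ℝ) (_ : 0 < a) (t : Fin 4 → ℝ) :
      (Qform v (a • t) ^ 2)⁻¹ = (a ^ 4)⁻¹ * (Qform v t ^ 2)⁻¹ := by
    rw [Qform_smul]
    ring
  rw [Jint, Jint, setIntegral_simplexDom_comp_tOf (c := fun i => ‖l i‖ ^ 2)
    (fun i => pow_pos (norm_pos_iff.2 (hl i)) 2) (fun t => (Qform v t ^ 2)⁻¹) hhom]
  simp only [Qform_smul_vectors]
  rfl

theorem f4_mul_Jint_scaling_invariant_general (v : Fin 4 → Fin 2 → ℂ)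
    (l : Fin 4 → ℂ) (hl : ∀ i, l i ≠ 0) (w : Fin 4 → Fin 2 → ℂ)
    (hw : ∀ i, w i = l i • v i) :
    f4 (w 0) (w 1) (w 2) (w 3) * Jint w = f4 (v 0) (v 1) (v 2) (v 3) * Jint v := by
  obtain rfl : w = fun i => l i • v i := funext hw
  rw [f4_smul, Jint_eq_mul_Jint_smul v hl, Fin.prod_univ_four]
  simp only [Complex.normSq_eq_norm_sq, norm_mul]
  ring

/-- `f(v₀,…,v₃)·∫_{Δ³} Q_v(t)^{-2} dt` is invariant under rescaling each vector by a
nonzero scalar. -/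
theorem f4_mul_Jint_scaling_invariant (v : Fin 4 → Fin 2 → ℂ)
    (hv : ∀ i, v i ≠ 0)
    (hind : ∀ i j : Fin 4, i ≠ j → LinearIndependent ℂ ![v i, v j])
    (l : Fin 4 → ℂ) (hl : ∀ i, l i ≠ 0) (w : Fin 4 → Fin 2 → ℂ)
    (hw : ∀ i, w i = l i • v i) :
    f4 (w 0) (w 1) (w 2) (w 3) * Jint w = f4 (v 0) (v 1) (v 2) (v 3) * Jint v :=
  f4_mul_Jint_scaling_invariant_general v l hl w hw
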